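/- arXiv:1312.5658 — 3 statements merged into one kernel-verified Lean document; each statement's English description precedes it below -/
import Mathlib

section
/- Let γ > 0 and define g(u) = 1 + 2u/(1 + √(1+4u)) for u > 0. Then the map φ(z) := z · (1 − γ²/‖z‖₂²)₊ restricted to {z : ‖z‖₂ > γ} is a bijection onto ℝ^T \ {0} with inverse given by z ↦ g(γ²/‖z‖₂²) · z. -/
open Real

/-!
On the ray through a nonzero vector, `φ` acts on the norm as `r ↦ r - γ² / r`, an increasing
bijection of `(γ, ∞)` onto `(0, ∞)`. Its inverse is `s ↦ c s`, where `c` is the larger root of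
`c (c - 1) = γ² / s²`, namely `c = (1 + √(1 + 4 γ² / s²)) / 2`; rationalising the numerator
`√(1 + 4u) - 1` turns this into `g(γ² / s²)`.
-/

noncomputable section

def wienerExpandFactor (u : ℝ) : ℝ := (1 + √(1 + 4 * u)) / 2

theorem wienerExpandFactor_mul_sub_one {u : ℝ} (hu : 0 ≤ 1 + 4 * u) :
    wienerExpandFactor u * (wienerExpandFactor u - 1) = u := by
  have hs := Real.sq_sqrt hu
  unfold wienerExpandFactor
  linear_combination hs / 4

theorem one_le_wienerExpandFactor {u : ℝ} (hu : 0 ≤ u) : 1 ≤ wienerExpandFactor u := by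
  have : 1 ≤ √(1 + 4 * u) := Real.one_le_sqrt.2 (by linarith)
  unfold wienerExpandFactor
  linarith

theorem wienerExpandFactor_mul_sub_one_self {x : ℝ} (hx : 1 / 2 ≤ x) :
    wienerExpandFactor (x * (x - 1)) = x := by
  have hs : √(1 + 4 * (x * (x - 1))) = 2 * x - 1 := by
    rw [show 1 + 4 * (x * (x - 1)) = (2 * x - 1) ^ 2 by ring]
    exact Real.sqrt_sq (by linarith)
  rw [wienerExpandFactor, hs]
  ring

theorem one_add_two_mul_div_one_add_sqrt {u : ℝ} (hu : 0 ≤ 1 + 4 * u) :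
    1 + 2 * u / (1 + √(1 + 4 * u)) = wienerExpandFactor u := by
  have hs := Real.sq_sqrt hu
  rw [wienerExpandFactor]
  set s := √(1 + 4 * u)
  have hpos : 0 < 1 + s := by positivity
  field_simp
  linear_combination -hs

theorem sq_eq_wienerExpandFactor_mul_sq (γ : ℝ) {r : ℝ} (hr : r ≠ 0) :
    γ ^ 2 =
      wienerExpandFactor (γ ^ 2 / r ^ 2) * (wienerExpandFactor (γ ^ 2 / r ^ 2) - 1) * r ^ 2 := by
  rw [wienerExpandFactor_mul_sub_one (by positivity)]
  field_simp

section Wiener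

variable {E : Type*} [NormedAddCommGroup E] [NormedSpace ℝ E] (γ : ℝ)

def wienerShrink (z : E) : E := max (1 - γ ^ 2 / ‖z‖ ^ 2) 0 • z

def wienerExpand (z : E) : E := wienerExpandFactor (γ ^ 2 / ‖z‖ ^ 2) • z

variable {γ}

theorem norm_smul_sq (c : ℝ) (z : E) : ‖c • z‖ ^ 2 = c ^ 2 * ‖z‖ ^ 2 := by
  rw [norm_smul, mul_pow, Real.norm_eq_abs, sq_abs]

theorem one_sub_div_sq_pos {r : ℝ} (hγ : 0 ≤ γ) (hr : γ < r) : 0 < 1 - γ ^ 2 / r ^ 2 :=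
  sub_pos.2 <| (div_lt_one (pow_pos (hγ.trans_lt hr) 2)).2 (by gcongr)

theorem wienerShrink_of_lt {v : E} (hγ : 0 ≤ γ) (hv : γ < ‖v‖) :
    wienerShrink γ v = (1 - γ ^ 2 / ‖v‖ ^ 2) • v := by
  rw [wienerShrink, max_eq_left (one_sub_div_sq_pos hγ hv).le]

theorem wienerShrink_ne_zero {v : E} (hγ : 0 ≤ γ) (hv : γ < ‖v‖) : wienerShrink γ v ≠ 0 := by
  rw [wienerShrink_of_lt hγ hv]
  exact smul_ne_zero (one_sub_div_sq_pos hγ hv).ne' (norm_pos_iff.1 (hγ.trans_lt hv))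

theorem wienerExpand_wienerShrink {v : E} (hγ : 0 ≤ γ) (hv : γ < ‖v‖) :
    wienerExpand γ (wienerShrink γ v) = v := by
  set t := 1 - γ ^ 2 / ‖v‖ ^ 2 with ht
  have htpos : 0 < t := one_sub_div_sq_pos hγ hv
  have hv0 : ‖v‖ ≠ 0 := (hγ.trans_lt hv).ne'
  have ht1 : t ≤ 1 := sub_le_self 1 (by positivity)
  have hγ2 : γ ^ 2 = (1 - t) * ‖v‖ ^ 2 := by
    rw [ht]
    field_simp
    ring
  have hu : γ ^ 2 / ‖t • v‖ ^ 2 = t⁻¹ * (t⁻¹ - 1) := by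
    rw [norm_smul_sq, hγ2]
    field_simp
  have hinv : 1 / 2 ≤ t⁻¹ := by
    rw [le_inv_comm₀ (by norm_num) htpos]
    linarith
  rw [wienerShrink_of_lt hγ hv, wienerExpand, hu, wienerExpandFactor_mul_sub_one_self hinv,
    inv_smul_smul₀ htpos.ne']

theorem wienerShrink_wienerExpand {z : E} (hz : z ≠ 0) :
    wienerShrink γ (wienerExpand γ z) = z := by
  set c := wienerExpandFactor (γ ^ 2 / ‖z‖ ^ 2)
  have hc : 0 < c := zero_lt_one.trans_le (one_le_wienerExpandFactor (by positivity))
  have hcoef : 1 - γ ^ 2 / ‖c • z‖ ^ 2 = c⁻¹ := by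
    rw [norm_smul_sq, sq_eq_wienerExpandFactor_mul_sq γ (norm_ne_zero_iff.2 hz)]
    field_simp
    ring
  rw [wienerShrink, wienerExpand, hcoef, max_eq_left (inv_nonneg.2 hc.le),
    inv_smul_smul₀ hc.ne']

theorem lt_norm_wienerExpand {z : E} (hz : z ≠ 0) : γ < ‖wienerExpand γ z‖ := by
  set c := wienerExpandFactor (γ ^ 2 / ‖z‖ ^ 2)
  have hc1 : 1 ≤ c := one_le_wienerExpandFactor (by positivity)
  have hz0 : 0 < ‖z‖ := norm_pos_iff.2 hz
  have hsq : γ ^ 2 < ‖c • z‖ ^ 2 := by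
    rw [norm_smul_sq, sq_eq_wienerExpandFactor_mul_sq γ (norm_ne_zero_iff.2 hz)]
    nlinarith [pow_pos hz0 2]
  exact (le_abs_self γ).trans_lt (abs_lt_of_sq_lt_sq hsq (norm_nonneg _))

end Wiener

end

/-- For `γ > 0`, the empirical Wiener map `φ(z) = (1 − γ²/‖z‖₂²)₊ z` restricted to
`{z : ‖z‖₂ > γ}` is a bijection onto `ℝ^T \ {0}`, with inverse `z ↦ g(γ²/‖z‖₂²) z` where
`g(u) = 1 + 2u/(1 + √(1+4u))`. -/
theorem stmt_6 (T : ℕ) (γ : ℝ) (hγ : 0 < γ)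
    (φ : EuclideanSpace ℝ (Fin T) → EuclideanSpace ℝ (Fin T))
    (hφ : ∀ z, φ z = max (1 - γ ^ 2 / ‖z‖ ^ 2) 0 • z)
    (g : ℝ → ℝ) (hg : ∀ u, g u = 1 + 2 * u / (1 + Real.sqrt (1 + 4 * u))) :
    Set.BijOn φ {z | γ < ‖z‖} {z | z ≠ 0} ∧
      (∀ z : EuclideanSpace ℝ (Fin T), z ≠ 0 → φ (g (γ ^ 2 / ‖z‖ ^ 2) • z) = z) ∧
      (∀ v : EuclideanSpace ℝ (Fin T), γ < ‖v‖ → g (γ ^ 2 / ‖φ v‖ ^ 2) • φ v = v) := by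
  obtain rfl : φ = wienerShrink γ := funext hφ
  have hg_smul (z : EuclideanSpace ℝ (Fin T)) : g (γ ^ 2 / ‖z‖ ^ 2) • z = wienerExpand γ z := by
    rw [hg, one_add_two_mul_div_one_add_sqrt (by positivity), wienerExpand]
  simp only [hg_smul]
  have hinv : Set.InvOn (wienerExpand γ) (wienerShrink γ)
      {v : EuclideanSpace ℝ (Fin T) | γ < ‖v‖} {z | z ≠ 0} :=
    ⟨fun _ hv ↦ wienerExpand_wienerShrink hγ.le hv, fun _ hz ↦ wienerShrink_wienerExpand hz⟩
  refine ⟨hinv.bijOn ?_ ?_, hinv.2, hinv.1⟩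
  · exact fun _ hv ↦ wienerShrink_ne_zero hγ.le hv
  · exact fun _ hz ↦ lt_norm_wienerExpand hz
end

section
/- Let γ > 0 and ℓ ≥ 1. Define h : ℝ^ℓ → ℝ by h(x) = γ² [ asinh(‖x‖/(2γ)) − (1/2) exp(−2 asinh(‖x‖/(2γ))) ]. Then for every u ∈ ℝ^ℓ, the unique minimizer of x ↦ h(x) + (1/2)‖x − u‖² is Ψ₃(u) defined componentwise by Ψ₃(u)_j = u_j (1 − γ²/‖u‖²)₊, i.e. Ψ₃(u) = 0 if ‖u‖ ≤ γ and Ψ₃(u) = (1 − γ²/‖u‖²) u otherwise. -/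
/-!
With `q` the radial profile of `h` and `a = ‖u‖`, the reverse triangle inequality gives
`h x + ½‖x - u‖² ≥ φ(‖x‖)` where `φ r = q r + ½ (r - a)²`, with equality at `Ψ₃ u`.
Since `r = 2γ sinh s` for `s = arsinh (r / 2γ)`, one finds `φ' r = γ eˢ - a`, which is strictly
increasing, so `φ` is strictly convex. Its minimum over `r ≥ 0` is at `‖Ψ₃ u‖`: at `0` when `a ≤ γ`
(then `φ' 0 = γ - a ≥ 0`), and at the root `a - γ² / a = 2γ sinh (log (a / γ))` otherwise.
Among the points of norm `‖Ψ₃ u‖`, the one on the ray through `u` is strictly closest to `u`.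
-/

open Real

noncomputable def wienerPenalty (γ r : ℝ) : ℝ :=
  γ ^ 2 * (arsinh (r / (2 * γ)) - 1 / 2 * exp (-2 * arsinh (r / (2 * γ))))

lemma hasDerivAt_wienerPenalty {γ : ℝ} (hγ : γ ≠ 0) (r : ℝ) :
    HasDerivAt (wienerPenalty γ) (γ * exp (-arsinh (r / (2 * γ)))) r := by
  set s := arsinh (r / (2 * γ))
  have hs : HasDerivAt (fun x => arsinh (x / (2 * γ))) ((cosh s)⁻¹ * (1 / (2 * γ))) r := by
    rw [cosh_arsinh]
    exact (hasDerivAt_arsinh _).comp r ((hasDerivAt_id r).div_const (2 * γ))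
  refine ((hs.sub ((hs.const_mul (-2)).exp.const_mul (1 / 2))).const_mul (γ ^ 2)).congr_deriv ?_
  have hE := exp_pos s
  rw [cosh_eq, show -2 * s = -s + -s by ring, exp_add, exp_neg]
  field_simp
  ring

noncomputable def wienerObjective (γ a r : ℝ) : ℝ := wienerPenalty γ r + 1 / 2 * (r - a) ^ 2

lemma hasDerivAt_wienerObjective {γ : ℝ} (hγ : γ ≠ 0) (a r : ℝ) :
    HasDerivAt (wienerObjective γ a) (γ * exp (arsinh (r / (2 * γ))) - a) r := by
  have hr : r = γ * (exp (arsinh (r / (2 * γ))) - exp (-arsinh (r / (2 * γ)))) := by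
    have := sinh_arsinh (r / (2 * γ))
    rw [sinh_eq] at this
    field_simp at this
    linarith
  refine ((hasDerivAt_wienerPenalty hγ r).add
    ((((hasDerivAt_id' r).sub_const a).pow 2).const_mul (1 / 2))).congr_deriv ?_
  linear_combination hr

lemma strictConvexOn_wienerObjective {γ : ℝ} (hγ : 0 < γ) (a : ℝ) :
    StrictConvexOn ℝ Set.univ (wienerObjective γ a) := by
  have hderiv : deriv (wienerObjective γ a) = fun r => γ * exp (arsinh (r / (2 * γ))) - a :=
    funext fun r => (hasDerivAt_wienerObjective hγ.ne' a r).deriv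
  refine StrictMono.strictConvexOn_univ_of_deriv ?_ ?_
  · exact continuous_iff_continuousAt.2 fun r =>
      (hasDerivAt_wienerObjective hγ.ne' a r).continuousAt
  · rw [hderiv]
    intro r t hrt
    have hs := arsinh_strictMono (div_lt_div_of_pos_right hrt (by positivity : (0:ℝ) < 2 * γ))
    dsimp only
    gcongr

lemma StrictConvexOn.add_mul_sub_lt_of_hasDerivAt {f : ℝ → ℝ} {x y f' : ℝ}
    (hf : StrictConvexOn ℝ Set.univ f) (hfx : HasDerivAt f f' x) (hxy : x ≠ y) :
    f x + f' * (y - x) < f y := by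
  rcases hxy.lt_or_gt with hlt | hgt
  · have := hf.lt_slope_of_hasDerivAt trivial trivial hlt hfx
    rw [slope_def_field, lt_div_iff₀ (sub_pos.2 hlt)] at this
    linarith
  · have := hf.slope_lt_of_hasDerivAt trivial trivial hgt hfx
    rw [slope_def_field, div_lt_iff₀ (sub_pos.2 hgt)] at this
    linarith

lemma exp_arsinh_shrink {γ a : ℝ} (hγ : 0 < γ) (ha : γ < a) :
    γ * exp (arsinh ((1 - γ ^ 2 / a ^ 2) * a / (2 * γ))) = a := by
  have ha0 : 0 < a := hγ.trans ha
  have : (1 - γ ^ 2 / a ^ 2) * a / (2 * γ) = sinh (log (a / γ)) := by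
    rw [sinh_log (by positivity)]
    field_simp
  rw [this, arsinh_sinh, exp_log (by positivity)]
  field_simp

lemma wienerObjective_shrink_lt {γ a r : ℝ} (hγ : 0 < γ) (ha : 0 ≤ a) (hr : 0 ≤ r)
    (hne : max (1 - γ ^ 2 / a ^ 2) 0 * a ≠ r) :
    wienerObjective γ a (max (1 - γ ^ 2 / a ^ 2) 0 * a) < wienerObjective γ a r := by
  set r₀ := max (1 - γ ^ 2 / a ^ 2) 0 * a
  have htangent := (strictConvexOn_wienerObjective hγ a).add_mul_sub_lt_of_hasDerivAt
    (hasDerivAt_wienerObjective hγ.ne' a r₀) hne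
  -- `r₀` is the root of the derivative if `γ < a`; otherwise `r₀ = 0`, where it is `γ - a ≥ 0`.
  suffices 0 ≤ (γ * exp (arsinh (r₀ / (2 * γ))) - a) * (r - r₀) by linarith
  rcases le_or_gt a γ with hle | hgt
  · have hr₀ : r₀ = 0 := by
      rcases ha.eq_or_lt with rfl | ha0
      · exact mul_zero _
      · have : 1 ≤ γ ^ 2 / a ^ 2 := by rw [one_le_div (by positivity)]; gcongr
        simp only [r₀, max_eq_right (sub_nonpos.2 this), zero_mul]
    rw [hr₀, zero_div, arsinh_zero, exp_zero, mul_one, sub_zero]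
    exact mul_nonneg (sub_nonneg.2 hle) hr
  · have hr₀ : r₀ = (1 - γ ^ 2 / a ^ 2) * a := by
      have : γ ^ 2 / a ^ 2 < 1 := by rw [div_lt_one (by nlinarith)]; gcongr
      simp only [r₀, max_eq_left (by linarith : (0:ℝ) ≤ 1 - γ ^ 2 / a ^ 2)]
    rw [hr₀, exp_arsinh_shrink hγ hgt, sub_self, zero_mul]

lemma norm_smul_sub_lt_norm_sub {E : Type*} [NormedAddCommGroup E] [InnerProductSpace ℝ E]
    {c : ℝ} (hc : 0 ≤ c) {u x : E} (hx : ‖x‖ = ‖c • u‖) (hne : x ≠ c • u) :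
    ‖c • u - u‖ < ‖x - u‖ := by
  have hnorm : ‖c • u‖ = c * ‖u‖ := by rw [norm_smul, norm_of_nonneg hc]
  have hsep : 0 < ‖x - c • u‖ ^ 2 := pow_pos (norm_pos_iff.2 (sub_ne_zero.2 hne)) 2
  rw [norm_sub_sq_real, real_inner_smul_right, hx, hnorm] at hsep
  have hgap : 0 < c * ‖u‖ ^ 2 - inner ℝ x u :=
    pos_of_mul_pos_right (by linarith : 0 < c * (c * ‖u‖ ^ 2 - inner ℝ x u)) hc
  rw [← sq_lt_sq₀ (norm_nonneg _) (norm_nonneg _), norm_sub_sq_real, norm_sub_sq_real,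
    real_inner_smul_left, real_inner_self_eq_norm_sq, hx]
  linarith

theorem stmt_7_general (l : ℕ) (γ : ℝ) (hγ : 0 < γ)
    (h : EuclideanSpace ℝ (Fin l) → ℝ)
    (hh : ∀ x, h x = γ ^ 2 * (Real.arsinh (‖x‖ / (2 * γ))
      - (1 / 2) * Real.exp (-2 * Real.arsinh (‖x‖ / (2 * γ)))))
    (Ψ : EuclideanSpace ℝ (Fin l) → EuclideanSpace ℝ (Fin l))
    (hΨ : ∀ u, Ψ u = max (1 - γ ^ 2 / ‖u‖ ^ 2) 0 • u) :
    ∀ u x : EuclideanSpace ℝ (Fin l), x ≠ Ψ u →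
      h (Ψ u) + (1 / 2) * ‖Ψ u - u‖ ^ 2 < h x + (1 / 2) * ‖x - u‖ ^ 2 := by
  intro u x hx
  have h_radial : ∀ y, h y = wienerPenalty γ ‖y‖ := hh
  set c := max (1 - γ ^ 2 / ‖u‖ ^ 2) 0
  have hc : 0 ≤ c := le_max_right _ _
  have hnorm : ‖c • u‖ = c * ‖u‖ := by rw [norm_smul, norm_of_nonneg hc]
  rw [hΨ u] at hx ⊢
  by_cases hxn : ‖x‖ = ‖c • u‖
  · have hcloser := norm_smul_sub_lt_norm_sub hc hxn hx
    rw [h_radial, h_radial, hxn]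
    gcongr
  · have hmin : h (c • u) + 1 / 2 * ‖c • u - u‖ ^ 2 = wienerObjective γ ‖u‖ (c * ‖u‖) := by
      have hsub : c • u - u = (c - 1) • u := by rw [sub_smul, one_smul]
      rw [h_radial, hnorm, wienerObjective, hsub, norm_smul, Real.norm_eq_abs, mul_pow, sq_abs]
      ring
    have hlower : wienerObjective γ ‖u‖ ‖x‖ ≤ h x + 1 / 2 * ‖x - u‖ ^ 2 := by
      rw [h_radial, wienerObjective]
      gcongr _ + 1 / 2 * ?_
      exact sq_le_sq.2 ((abs_norm_sub_norm_le x u).trans (le_abs_self _))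
    rw [hmin]
    refine (wienerObjective_shrink_lt hγ (norm_nonneg u) (norm_nonneg x) ?_).trans_le hlower
    rwa [← hnorm, ne_comm]

/-- For `γ > 0` and `ℓ ≥ 1`, with `h(x) = γ²[asinh(‖x‖/(2γ)) − ½ exp(−2 asinh(‖x‖/(2γ)))]`,
the unique minimizer of `x ↦ h(x) + ½‖x − u‖²` is `Ψ₃(u) = (1 − γ²/‖u‖²)₊ u`. -/
theorem stmt_7 (l : ℕ) (hl : 1 ≤ l) (γ : ℝ) (hγ : 0 < γ)
    (h : EuclideanSpace ℝ (Fin l) → ℝ)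
    (hh : ∀ x, h x = γ ^ 2 * (Real.arsinh (‖x‖ / (2 * γ))
      - (1 / 2) * Real.exp (-2 * Real.arsinh (‖x‖ / (2 * γ)))))
    (Ψ : EuclideanSpace ℝ (Fin l) → EuclideanSpace ℝ (Fin l))
    (hΨ : ∀ u, Ψ u = max (1 - γ ^ 2 / ‖u‖ ^ 2) 0 • u) :
    ∀ u x : EuclideanSpace ℝ (Fin l), x ≠ Ψ u →
      h (Ψ u) + (1 / 2) * ‖Ψ u - u‖ ^ 2 < h x + (1 / 2) * ‖x - u‖ ^ 2 :=
  stmt_7_general l γ hγ h hh Ψ hΨ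
end

section
/- Let G ∈ ℝ^{N×P}, Y ∈ ℝ^N, τ, v > 0, λ ≥ 0, and for x ∈ ℝ^P define π(x) ∝ exp(−(1/(2τ))‖Y − Gx‖₂² − λ‖x‖₁ − v‖x‖₂²) (restricted to each sparsity stratum). Then for every s > 0 and unit direction n(x) = x/‖x‖₂, sup_{‖x‖₂ ≥ r} π(x + s·n(x))/π(x) → 0 as r → ∞; i.e. π is super-exponential. -/
open Real Matrix Filter Topology

/-!
Moving from `x` to `(1 + c) • x` with `c = s / ‖x‖` changes the exponent of `π` by at most
`(c / τ) ⟪Y, G x⟫ - 2 v c ‖x‖²`: the data-misfit term can only gain the cross term, and the `ℓ¹`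
penalty only grows. Since `⟪Y, G x⟫ ≤ ‖Gᵀ Y‖ ‖x‖`, the log-ratio is at most
`(s / τ) ‖Gᵀ Y‖ - 2 v s ‖x‖`, which tends to `-∞` as `‖x‖ → ∞`.
-/

noncomputable def elasticNetLogDensity {m n : Type*} [Fintype m] [Fintype n]
    (G : Matrix m n ℝ) (Y : m → ℝ) (τ v lam : ℝ) (x : EuclideanSpace ℝ n) : ℝ :=
  -(1 / (2 * τ)) * ∑ i, (Y i - G.mulVec x i) ^ 2 - lam * ∑ j, |x j| - v * ‖x‖ ^ 2

lemma sum_sq_sub_sub_le_sum_sq_sub_one_add_mul {ι : Type*} (s : Finset ι) (a b : ι → ℝ)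
    {c : ℝ} (hc : 0 ≤ c) :
    ∑ i ∈ s, (a i - b i) ^ 2 - 2 * c * ∑ i ∈ s, a i * b i
      ≤ ∑ i ∈ s, (a i - (1 + c) * b i) ^ 2 := by
  rw [Finset.mul_sum, ← Finset.sum_sub_distrib]
  refine Finset.sum_le_sum fun i _ => ?_
  nlinarith [mul_nonneg (by positivity : 0 ≤ 2 * c + c ^ 2) (sq_nonneg (b i))]

lemma sum_mul_mulVec_le {m n : Type*} [Fintype m] [Fintype n] (G : Matrix m n ℝ) (Y : m → ℝ)
    (x : EuclideanSpace ℝ n) :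
    ∑ i, Y i * G.mulVec x i ≤ ‖WithLp.toLp 2 (Y ᵥ* G)‖ * ‖x‖ := by
  have hinner : ∑ i, Y i * G.mulVec x i = inner ℝ (WithLp.toLp 2 (Y ᵥ* G)) x := by
    change Y ⬝ᵥ G *ᵥ x = _
    simp [dotProduct_mulVec, EuclideanSpace.inner_eq_star_dotProduct, dotProduct_comm]
  rw [hinner]
  exact real_inner_le_norm _ _

section LogDensity

variable {m n : Type*} [Fintype m] [Fintype n] (G : Matrix m n ℝ) (Y : m → ℝ) {τ v lam : ℝ}

lemma elasticNetLogDensity_one_add_smul_sub_le (hτ : 0 < τ) (hv : 0 ≤ v) (hlam : 0 ≤ lam)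
    {c : ℝ} (hc : 0 ≤ c) (x : EuclideanSpace ℝ n) :
    elasticNetLogDensity G Y τ v lam ((1 + c) • x) - elasticNetLogDensity G Y τ v lam x
      ≤ c / τ * ∑ i, Y i * G.mulVec x i - 2 * v * c * ‖x‖ ^ 2 := by
  have hmulVec : ∀ i, G.mulVec (WithLp.ofLp ((1 + c) • x)) i = (1 + c) * G.mulVec x i :=
    fun i => by simp [mulVec_smul]
  have hl1 : ∑ j, |((1 + c) • x) j| = (1 + c) * ∑ j, |x j| := by
    simp [abs_mul, abs_of_nonneg (by linarith : (0 : ℝ) ≤ 1 + c), Finset.mul_sum]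
  have hnorm : ‖(1 + c) • x‖ = (1 + c) * ‖x‖ := by
    rw [norm_smul, Real.norm_of_nonneg (by linarith)]
  have hmisfit := sum_sq_sub_sub_le_sum_sq_sub_one_add_mul Finset.univ Y (G.mulVec x) hc
  simp only [elasticNetLogDensity, hmulVec, hl1, hnorm]
  have hτ' : 0 < 1 / (2 * τ) := by positivity
  have hcτ : c / τ = 1 / (2 * τ) * (2 * c) := by field_simp
  rw [hcτ]
  have hl1_nonneg : 0 ≤ ∑ j, |x j| := Finset.sum_nonneg fun j _ => abs_nonneg (x j)
  nlinarith [mul_nonneg (mul_nonneg hlam hc) hl1_nonneg,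
    mul_nonneg hv (sq_nonneg (c * ‖x‖)), mul_le_mul_of_nonneg_left hmisfit hτ'.le]

lemma elasticNetLogDensity_add_smul_sub_le (hτ : 0 < τ) (hv : 0 ≤ v) (hlam : 0 ≤ lam)
    {s : ℝ} (hs : 0 ≤ s) {x : EuclideanSpace ℝ n} (hx : x ≠ 0) :
    elasticNetLogDensity G Y τ v lam (x + (s / ‖x‖) • x) - elasticNetLogDensity G Y τ v lam x
      ≤ s / τ * ‖WithLp.toLp 2 (Y ᵥ* G)‖ - 2 * v * s * ‖x‖ := by
  have hx' : 0 < ‖x‖ := norm_pos_iff.2 hx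
  have hc : 0 ≤ s / ‖x‖ := by positivity
  rw [show x + (s / ‖x‖) • x = (1 + s / ‖x‖) • x by rw [add_smul, one_smul]]
  refine (elasticNetLogDensity_one_add_smul_sub_le G Y hτ hv hlam hc x).trans ?_
  calc s / ‖x‖ / τ * ∑ i, Y i * G.mulVec x i - 2 * v * (s / ‖x‖) * ‖x‖ ^ 2
      ≤ s / ‖x‖ / τ * (‖WithLp.toLp 2 (Y ᵥ* G)‖ * ‖x‖) - 2 * v * (s / ‖x‖) * ‖x‖ ^ 2 := by
        gcongr
        exact sum_mul_mulVec_le G Y x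
    _ = s / τ * ‖WithLp.toLp 2 (Y ᵥ* G)‖ - 2 * v * s * ‖x‖ := by
        field_simp

end LogDensity

lemma tendsto_exp_sub_mul_atTop {a b : ℝ} (hb : 0 < b) :
    Tendsto (fun t : ℝ => exp (a - b * t)) atTop (𝓝 0) := by
  have hlin : Tendsto (fun t : ℝ => -(b * t)) atTop atBot :=
    tendsto_neg_atTop_atBot.comp (tendsto_id.const_mul_atTop hb)
  simpa only [Function.comp_def, sub_eq_add_neg] using
    tendsto_exp_atBot.comp (tendsto_atBot_add_const_left _ a hlin)

/-- The target density
`π(x) ∝ exp(−(1/(2τ))‖Y − Gx‖₂² − λ‖x‖₁ − v‖x‖₂²)` is super-exponential: for every `s > 0`,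
`sup_{‖x‖₂ ≥ r} π(x + s n(x))/π(x) → 0` as `r → ∞`, where `n(x) = x/‖x‖₂`. -/
theorem stmt_14 (N P : ℕ) (G : Matrix (Fin N) (Fin P) ℝ) (Y : Fin N → ℝ)
    (τ v lam : ℝ) (hτ : 0 < τ) (hv : 0 < v) (hlam : 0 ≤ lam)
    (π' : EuclideanSpace ℝ (Fin P) → ℝ)
    (hπ : ∀ x, π' x = Real.exp (-(1 / (2 * τ)) * ∑ i, (Y i - G.mulVec x i) ^ 2
      - lam * ∑ j, |x j| - v * ‖x‖ ^ 2)) :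
    ∀ s : ℝ, 0 < s → ∀ ε : ℝ, 0 < ε → ∃ r : ℝ, 0 < r ∧
      ∀ x : EuclideanSpace ℝ (Fin P), r ≤ ‖x‖ →
        π' (x + (s / ‖x‖) • x) / π' x < ε := by
  intro s hs ε hε
  set K := ‖WithLp.toLp 2 (Y ᵥ* G)‖
  obtain ⟨r, hr⟩ := eventually_atTop.1
    ((tendsto_exp_sub_mul_atTop (a := s / τ * K) (by positivity : 0 < 2 * v * s)).eventually_lt_const hε)
  refine ⟨max r 1, by positivity, fun x hx => ?_⟩
  have hx0 : x ≠ 0 := norm_pos_iff.1 (lt_of_lt_of_le one_pos (le_of_max_le_right hx))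
  calc π' (x + (s / ‖x‖) • x) / π' x
      = exp (elasticNetLogDensity G Y τ v lam (x + (s / ‖x‖) • x)
          - elasticNetLogDensity G Y τ v lam x) := by
        rw [exp_sub, hπ, hπ]; rfl
    _ ≤ exp (s / τ * K - 2 * v * s * ‖x‖) :=
        exp_le_exp.2 (elasticNetLogDensity_add_smul_sub_le G Y hτ hv.le hlam hs.le hx0)
    _ < ε := hr _ (le_of_max_le_left hx)
end
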